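/- arXiv:1401.0134 — 2 statements merged into one kernel-verified Lean document; each statement's English description precedes it below -/
import Mathlib

section
/- Let A be an n×n copositive matrix and let w ∈ ℝ^n be a nonzero vector. Then A is irreducible with respect to the rank-one matrix w w^T if and only if there exists a zero u of A with w^T u ≠ 0. -/
open Filter Topology


open Matrix

/-- A symmetric matrix `A` is copositive if `xᵀ A x ≥ 0` for all entrywise nonnegative `x`. -/
def Copositive {n : ℕ} (A : Matrix (Fin n) (Fin n) ℝ) : Prop :=
  A.IsSymm ∧ ∀ x : Fin n → ℝ, (∀ i, 0 ≤ x i) → 0 ≤ x ⬝ᵥ A.mulVec x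

/-- The support of a vector. -/
def Supp {ι : Type*} (u : ι → ℝ) : Set ι := {i | u i ≠ 0}

/-- A zero of a copositive matrix: a nonzero nonnegative vector `u` with `uᵀ A u = 0`. -/
def IsZeroOf {n : ℕ} (A : Matrix (Fin n) (Fin n) ℝ) (u : Fin n → ℝ) : Prop :=
  u ≠ 0 ∧ (∀ i, 0 ≤ u i) ∧ u ⬝ᵥ A.mulVec u = 0

/-- A minimal zero: a zero such that no zero has support strictly contained in its support. -/
def IsMinimalZeroOf {n : ℕ} (A : Matrix (Fin n) (Fin n) ℝ) (u : Fin n → ℝ) : Prop :=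
  IsZeroOf A u ∧ ¬ ∃ v, IsZeroOf A v ∧ Supp v ⊂ Supp u

/-- The principal submatrix of `A` with rows and columns in `I`. -/
def subMat {n : ℕ} (A : Matrix (Fin n) (Fin n) ℝ) (I : Finset (Fin n)) :
    Matrix {i // i ∈ I} {i // i ∈ I} ℝ :=
  A.submatrix Subtype.val Subtype.val

/-- The subvector of `u` with indices in `I`. -/
def subVec {n : ℕ} (u : Fin n → ℝ) (I : Finset (Fin n)) : {i // i ∈ I} → ℝ :=
  fun i => u i.val

/-- Irreducibility of a copositive matrix `A` with respect to a set `M` of matrices. -/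
def IrreducibleWrtSet {n : ℕ} (A : Matrix (Fin n) (Fin n) ℝ)
    (M : Set (Matrix (Fin n) (Fin n) ℝ)) : Prop :=
  ¬ ∃ γ : ℝ, 0 < γ ∧ ∃ B ∈ M, B ≠ 0 ∧ Copositive (A - γ • B)

/-- Irreducibility of a copositive matrix `A` with respect to a single matrix `M`. -/
def IrreducibleWrtMat {n : ℕ} (A M : Matrix (Fin n) (Fin n) ℝ) : Prop :=
  ¬ ∃ γ : ℝ, 0 < γ ∧ Copositive (A - γ • M)

/-- An extremal element of a cone `K` of vectors. -/
def IsExtremalIn {ι : Type*} (K : Set (ι → ℝ)) (u : ι → ℝ) : Prop :=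
  u ∈ K ∧ u ≠ 0 ∧ ∀ v w, v ∈ K → w ∈ K → u = v + w →
    (∃ a : ℝ, 0 ≤ a ∧ v = a • u) ∧ (∃ b : ℝ, 0 ≤ b ∧ w = b • u)

/-- The matrix with entries 1 at positions `(i,j)` and `(j,i)` and 0 elsewhere. -/
def Eij {n : ℕ} (i j : Fin n) : Matrix (Fin n) (Fin n) ℝ :=
  fun a b => if (a = i ∧ b = j) ∨ (a = j ∧ b = i) then 1 else 0

section Helpers

variable {n : ℕ}

lemma symm_dot (A : Matrix (Fin n) (Fin n) ℝ) (h : A.IsSymm) (x y : Fin n → ℝ) :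
    x ⬝ᵥ A.mulVec y = y ⬝ᵥ A.mulVec x := by
  rw [dotProduct_mulVec, ← mulVec_transpose, h.eq, dotProduct_comm]

lemma qf_expand (A : Matrix (Fin n) (Fin n) ℝ) (h : A.IsSymm) (x v : Fin n → ℝ) (t : ℝ) :
    (x - t • v) ⬝ᵥ A.mulVec (x - t • v)
      = x ⬝ᵥ A.mulVec x - 2 * t * (v ⬝ᵥ A.mulVec x) + t ^ 2 * (v ⬝ᵥ A.mulVec v) := by
  rw [sub_dotProduct, mulVec_sub, mulVec_smul, dotProduct_sub, dotProduct_sub,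
    smul_dotProduct, dotProduct_smul, dotProduct_smul, symm_dot A h x v]
  simp only [smul_dotProduct, dotProduct_smul, smul_eq_mul]; ring

lemma qf_expand_add (A : Matrix (Fin n) (Fin n) ℝ) (h : A.IsSymm) (x v : Fin n → ℝ) (t : ℝ) :
    (x + t • v) ⬝ᵥ A.mulVec (x + t • v)
      = x ⬝ᵥ A.mulVec x + 2 * t * (v ⬝ᵥ A.mulVec x) + t ^ 2 * (v ⬝ᵥ A.mulVec v) := by
  rw [add_dotProduct, mulVec_add, mulVec_smul, dotProduct_add, dotProduct_add,
    smul_dotProduct, dotProduct_smul, dotProduct_smul, symm_dot A h x v]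
  simp only [smul_dotProduct, dotProduct_smul, smul_eq_mul]; ring

lemma vecMulVec_quad (w x : Fin n → ℝ) :
    x ⬝ᵥ (vecMulVec w w).mulVec x = (w ⬝ᵥ x) * (w ⬝ᵥ x) := by
  simp only [dotProduct, mulVec, vecMulVec_apply, Finset.mul_sum, Finset.sum_mul]
  rw [Finset.sum_comm]
  congr 1; ext i; congr 1; ext j; ring

lemma qf_cont (A : Matrix (Fin n) (Fin n) ℝ) :
    Continuous fun x : Fin n → ℝ => x ⬝ᵥ A.mulVec x := by
  simp only [dotProduct, mulVec]
  exact continuous_finset_sum _ fun i _ => (continuous_apply i).mul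
    (continuous_finset_sum _ fun j _ => continuous_const.mul (continuous_apply j))

lemma dot_cont (w : Fin n → ℝ) : Continuous fun x : Fin n → ℝ => w ⬝ᵥ x := by
  simp only [dotProduct]
  exact continuous_finset_sum _ fun i _ => continuous_const.mul (continuous_apply i)

lemma zero_dot_nonneg (A : Matrix (Fin n) (Fin n) ℝ)
    (hA : A.IsSymm ∧ ∀ x : Fin n → ℝ, (∀ i, 0 ≤ x i) → 0 ≤ x ⬝ᵥ A.mulVec x)
    (v : Fin n → ℝ) (hv0 : ∀ i, 0 ≤ v i) (hvz : v ⬝ᵥ A.mulVec v = 0)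
    (x : Fin n → ℝ) (hx : ∀ i, 0 ≤ x i) : 0 ≤ v ⬝ᵥ A.mulVec x := by
  by_contra hneg
  push_neg at hneg
  set a := v ⬝ᵥ A.mulVec x with ha
  set b := x ⬝ᵥ A.mulVec x with hb
  set t := -a / (|b| + 1) with ht
  have htpos : 0 < t := by
    apply div_pos (by linarith) (by positivity)
  have hnn : ∀ i, 0 ≤ (v + t • x) i := fun i => by
    have := hv0 i; have := hx i
    simp only [Pi.add_apply, Pi.smul_apply, smul_eq_mul]
    nlinarith
  have h0 := hA.2 _ hnn
  rw [qf_expand_add A hA.1 v x t, hvz] at h0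
  rw [symm_dot A hA.1 x v] at h0
  have hab : |b| + 1 > 0 := by positivity
  have hble : b ≤ |b| := le_abs_self b
  have : 2 * t * a + t ^ 2 * b < 0 := by
    have ht2 : t ^ 2 = t * t := sq t
    have h1 : t * (|b| + 1) = -a := by
      rw [ht]; field_simp
    nlinarith [sq_nonneg t, mul_pos htpos htpos]
  linarith

lemma key (A : Matrix (Fin n) (Fin n) ℝ)
    (hA : A.IsSymm ∧ ∀ x : Fin n → ℝ, (∀ i, 0 ≤ x i) → 0 ≤ x ⬝ᵥ A.mulVec x)
    (w : Fin n → ℝ) :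
    ∀ m : ℕ, ∀ S : Finset (Fin n), S.card ≤ m →
      (∀ ε > (0:ℝ), ∃ x : Fin n → ℝ, (∀ i, 0 ≤ x i) ∧ (∀ i ∉ S, x i = 0) ∧
        w ⬝ᵥ x = 1 ∧ x ⬝ᵥ A.mulVec x < ε) →
      ∃ z : Fin n → ℝ, (∀ i, 0 ≤ z i) ∧ w ⬝ᵥ z = 1 ∧ z ⬝ᵥ A.mulVec z = 0 := by
  intro m
  induction m with
  | zero =>
      intro S hS hex
      obtain ⟨x, hx0, hxS, hwx, _⟩ := hex 1 one_pos
      have hS0 : S = ∅ := Finset.card_eq_zero.mp (Nat.le_zero.mp hS)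
      exfalso
      have hx : x = 0 := funext fun i => hxS i (by simp [hS0])
      rw [hx] at hwx
      simp at hwx
  | succ m ih =>
      intro S hS hex
      by_cases hb : ∃ C : ℝ, ∀ ε > (0:ℝ), ∃ x : Fin n → ℝ,
          ((∀ i, 0 ≤ x i) ∧ (∀ i ∉ S, x i = 0) ∧ w ⬝ᵥ x = 1 ∧ x ⬝ᵥ A.mulVec x < ε) ∧ ‖x‖ ≤ C
      · -- bounded case: extract convergent subsequence
        obtain ⟨C, hC⟩ := hb
        choose x hx using fun k : ℕ => hC (1/((k:ℝ)+1)) (by positivity)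
        have hball : ∀ k, x k ∈ Metric.closedBall (0 : Fin n → ℝ) C := fun k => by
          simpa [Metric.mem_closedBall, dist_zero_right] using (hx k).2
        obtain ⟨z, _, φ, hφ, hlim⟩ :=
          (isCompact_closedBall (0 : Fin n → ℝ) C).tendsto_subseq hball
        refine ⟨z, ?_, ?_, ?_⟩
        · intro i
          have hti : Tendsto (fun k => x (φ k) i) atTop (𝓝 (z i)) :=
            ((continuous_apply i).tendsto z).comp hlim
          exact le_of_tendsto_of_tendsto' tendsto_const_nhds hti fun k => (hx (φ k)).1.1 i
        · have h1 : Tendsto (fun k => w ⬝ᵥ x (φ k)) atTop (𝓝 (w ⬝ᵥ z)) :=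
            ((dot_cont w).tendsto z).comp hlim
          have h2 : (fun k => w ⬝ᵥ x (φ k)) = fun _ => (1:ℝ) :=
            funext fun k => (hx (φ k)).1.2.2.1
          rw [h2] at h1
          exact tendsto_nhds_unique h1 tendsto_const_nhds
        · have h1 : Tendsto (fun k => x (φ k) ⬝ᵥ A.mulVec (x (φ k))) atTop
              (𝓝 (z ⬝ᵥ A.mulVec z)) := ((qf_cont A).tendsto z).comp hlim
          have hle : z ⬝ᵥ A.mulVec z ≤ 0 := by
            refine le_of_tendsto_of_tendsto' h1 tendsto_one_div_add_atTop_nhds_zero_nat ?_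
            intro k
            have h4 := (hx (φ k)).1.2.2.2
            have hmono : (k:ℝ) + 1 ≤ (φ k : ℝ) + 1 := by
              have hk : (k:ℝ) ≤ (φ k : ℝ) := Nat.cast_le.mpr hφ.le_apply
              linarith
            calc x (φ k) ⬝ᵥ A.mulVec (x (φ k)) ≤ 1/((φ k : ℝ)+1) := le_of_lt h4
              _ ≤ 1/((k:ℝ)+1) := one_div_le_one_div_of_le (by positivity) hmono
          exact le_antisymm hle (hA.2 z fun i => by
            exact le_of_tendsto_of_tendsto' tendsto_const_nhds
              (((continuous_apply i).tendsto z).comp hlim) fun k => (hx (φ k)).1.1 i)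
      · -- unbounded case: find a recession direction and reduce support
        push_neg at hb
        have hseq : ∀ k : ℕ, ∃ x : Fin n → ℝ, (∀ i, 0 ≤ x i) ∧ (∀ i ∉ S, x i = 0) ∧
            w ⬝ᵥ x = 1 ∧ x ⬝ᵥ A.mulVec x < 1/((k:ℝ)+1) ∧ (k:ℝ)+1 < ‖x‖ := by
          intro k
          obtain ⟨ε, hε, hbig⟩ := hb ((k:ℝ)+1)
          obtain ⟨x, h1, h2, h3, h4⟩ := hex (min ε (1/((k:ℝ)+1)))
            (lt_min hε (by positivity))
          exact ⟨x, h1, h2, h3, lt_of_lt_of_le h4 (min_le_right _ _),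
            hbig x ⟨h1, h2, h3, lt_of_lt_of_le h4 (min_le_left _ _)⟩⟩
        choose x hx0 hxS hwx hxq hxn using hseq
        have hxkpos : ∀ k, 0 < ‖x k‖ := fun k =>
          lt_trans (by positivity) (hxn k)
        have hxk1 : ∀ k, 1 ≤ ‖x k‖ := fun k => by
          have := hxn k
          have : (0:ℝ) ≤ (k:ℝ) := Nat.cast_nonneg k
          linarith [hxn k]
        set u : ℕ → (Fin n → ℝ) := fun k => ‖x k‖⁻¹ • x k with hu
        have hnorm1 : ∀ k, ‖u k‖ = 1 := fun k => by
          rw [hu]; simp only [norm_smul, norm_inv, norm_norm]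
          exact inv_mul_cancel₀ (hxkpos k).ne'
        have huball : ∀ k, u k ∈ Metric.closedBall (0 : Fin n → ℝ) 1 := fun k => by
          simp [Metric.mem_closedBall, dist_zero_right, hnorm1 k]
        obtain ⟨v, _, φ, hφ, hlim⟩ :=
          (isCompact_closedBall (0 : Fin n → ℝ) 1).tendsto_subseq huball
        have hmono : ∀ k : ℕ, (k:ℝ) + 1 ≤ (φ k : ℝ) + 1 := fun k => by
          have hk : (k:ℝ) ≤ (φ k : ℝ) := Nat.cast_le.mpr hφ.le_apply
          linarith
        -- properties of v
        have hv0 : ∀ i, 0 ≤ v i := by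
          intro i
          refine le_of_tendsto_of_tendsto' tendsto_const_nhds
            (((continuous_apply i).tendsto v).comp hlim) fun k => ?_
          have := hx0 (φ k) i
          have hp := (hxkpos (φ k))
          show 0 ≤ ‖x (φ k)‖⁻¹ • x (φ k) i
          simp only [smul_eq_mul]
          positivity
        have hvS : ∀ i ∉ S, v i = 0 := by
          intro i hi
          have h1 : Tendsto (fun k => u (φ k) i) atTop (𝓝 (v i)) :=
            ((continuous_apply i).tendsto v).comp hlim
          have h2 : (fun k => u (φ k) i) = fun _ => (0:ℝ) := funext fun k => by
            simp [hu, hxS (φ k) i hi]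
          rw [h2] at h1
          exact (tendsto_nhds_unique h1 tendsto_const_nhds).symm ▸ rfl
        have hnv : ‖v‖ = 1 := by
          have h1 : Tendsto (fun k => ‖u (φ k)‖) atTop (𝓝 ‖v‖) :=
            (continuous_norm.tendsto v).comp hlim
          have h2 : (fun k => ‖u (φ k)‖) = fun _ => (1:ℝ) := funext fun k => hnorm1 (φ k)
          rw [h2] at h1
          exact tendsto_nhds_unique h1 tendsto_const_nhds
        have hwv : w ⬝ᵥ v = 0 := by
          have h1 : Tendsto (fun k => w ⬝ᵥ u (φ k)) atTop (𝓝 (w ⬝ᵥ v)) :=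
            ((dot_cont w).tendsto v).comp hlim
          have h2 : ∀ k, w ⬝ᵥ u (φ k) = ‖x (φ k)‖⁻¹ := fun k => by
            rw [hu]; simp only [dotProduct_smul, hwx (φ k), smul_eq_mul, mul_one]
          have h3 : Tendsto (fun k => w ⬝ᵥ u (φ k)) atTop (𝓝 0) := by
            refine squeeze_zero (fun k => by rw [h2 k]; positivity) (fun k => ?_)
              tendsto_one_div_add_atTop_nhds_zero_nat
            rw [h2 k]
            rw [inv_eq_one_div]
            apply one_div_le_one_div_of_le (by positivity)
            exact le_trans (hmono k) (le_of_lt (hxn (φ k)))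
          exact tendsto_nhds_unique h1 h3
        have hvq : v ⬝ᵥ A.mulVec v = 0 := by
          have h1 : Tendsto (fun k => u (φ k) ⬝ᵥ A.mulVec (u (φ k))) atTop
              (𝓝 (v ⬝ᵥ A.mulVec v)) := ((qf_cont A).tendsto v).comp hlim
          have h2 : ∀ k, u k ⬝ᵥ A.mulVec (u k) = ‖x k‖⁻¹ * ‖x k‖⁻¹ * (x k ⬝ᵥ A.mulVec (x k)) := by
            intro k
            rw [hu]; simp only [smul_dotProduct, mulVec_smul, dotProduct_smul, smul_eq_mul]; ring
          have h3 : Tendsto (fun k => u (φ k) ⬝ᵥ A.mulVec (u (φ k))) atTop (𝓝 0) := by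
            refine squeeze_zero (fun k => ?_) (fun k => ?_)
              tendsto_one_div_add_atTop_nhds_zero_nat
            · rw [h2 (φ k)]
              have := hA.2 (x (φ k)) (hx0 (φ k))
              have hp := hxkpos (φ k)
              positivity
            · rw [h2 (φ k)]
              have hinv : ‖x (φ k)‖⁻¹ ≤ 1 := by
                rw [inv_le_one_iff₀]; right; exact hxk1 (φ k)
              have hq0 : 0 ≤ x (φ k) ⬝ᵥ A.mulVec (x (φ k)) := hA.2 _ (hx0 (φ k))
              have hq1 : x (φ k) ⬝ᵥ A.mulVec (x (φ k)) < 1/((k:ℝ)+1) :=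
                lt_of_lt_of_le (hxq (φ k))
                  (one_div_le_one_div_of_le (by positivity) (hmono k))
              have hi0 : 0 ≤ ‖x (φ k)‖⁻¹ := by positivity
              have h5 : ‖x (φ k)‖⁻¹ * ‖x (φ k)‖⁻¹ ≤ 1 := by nlinarith
              nlinarith
          exact tendsto_nhds_unique h1 h3
        have hvne : v ≠ 0 := fun h => by rw [h] at hnv; simp at hnv
        -- the support of v
        set T : Finset (Fin n) := Finset.univ.filter (fun j => v j ≠ 0) with hT
        have hTne : T.Nonempty := by
          by_contra h
          rw [Finset.not_nonempty_iff_eq_empty] at h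
          apply hvne
          funext i
          show v i = (0 : Fin n → ℝ) i
          simp only [Pi.zero_apply]
          by_contra hvi
          have : i ∈ T := by rw [hT]; simp [hvi]
          rw [h] at this; simp at this
        have hvpos : ∀ j ∈ T, 0 < v j := fun j hj => by
          rw [hT, Finset.mem_filter] at hj
          exact lt_of_le_of_ne (hv0 j) (Ne.symm hj.2)
        -- shift along v
        set t : ℕ → ℝ := fun k => T.inf' hTne (fun j => x k j / v j) with ht
        have ht0 : ∀ k, 0 ≤ t k := fun k =>
          Finset.le_inf' hTne _ fun j hj => div_nonneg (hx0 k j) (hvpos j hj).le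
        have hjex : ∀ k, ∃ j ∈ T, t k = x k j / v j := fun k =>
          Finset.exists_mem_eq_inf' hTne _
        choose j hjT hjeq using hjex
        set y : ℕ → (Fin n → ℝ) := fun k => x k - t k • v with hy
        have hy0 : ∀ k i, 0 ≤ y k i := by
          intro k i
          by_cases hi : i ∈ T
          · have h1 : t k ≤ x k i / v i := Finset.inf'_le _ hi
            have h2 : 0 < v i := hvpos i hi
            rw [hy]
            simp only [Pi.sub_apply, Pi.smul_apply, smul_eq_mul, sub_nonneg]
            exact (le_div_iff₀ h2).mp h1
          · have hvi : v i = 0 := by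
              by_contra h
              exact hi (by rw [hT]; simp [h])
            rw [hy]
            simp only [Pi.sub_apply, Pi.smul_apply, smul_eq_mul, hvi, mul_zero, sub_zero]
            exact hx0 k i
        have hyS : ∀ k, ∀ i ∉ S, y k i = 0 := by
          intro k i hi
          rw [hy]
          simp only [Pi.sub_apply, Pi.smul_apply, smul_eq_mul, hxS k i hi, hvS i hi,
            mul_zero, sub_zero]
        have hyw : ∀ k, w ⬝ᵥ y k = 1 := by
          intro k
          rw [hy]
          simp only [dotProduct_sub, dotProduct_smul, hwx k, hwv, smul_eq_mul, mul_zero, sub_zero]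
        have hyq : ∀ k, y k ⬝ᵥ A.mulVec (y k) ≤ x k ⬝ᵥ A.mulVec (x k) := by
          intro k
          rw [hy, qf_expand A hA.1 (x k) v (t k), hvq]
          have h1 : 0 ≤ v ⬝ᵥ A.mulVec (x k) := zero_dot_nonneg A hA v hv0 hvq (x k) (hx0 k)
          nlinarith [ht0 k]
        have hyj : ∀ k, y k (j k) = 0 := by
          intro k
          rw [hy]
          simp only [Pi.sub_apply, Pi.smul_apply, smul_eq_mul]
          rw [hjeq k, div_mul_cancel₀ _ (hvpos (j k) (hjT k)).ne', sub_self]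
        -- pigeonhole: some fiber is infinite
        obtain ⟨j0, hj0inf⟩ := Finite.exists_infinite_fiber j
        have hj0inf' : (j ⁻¹' {j0}).Infinite := Set.infinite_coe_iff.mp hj0inf
        obtain ⟨k0, hk0⟩ := hj0inf'.nonempty
        have hk0' : j k0 = j0 := hk0
        have hj0T : j0 ∈ T := hk0' ▸ hjT k0
        have hj0S : j0 ∈ S := by
          by_contra h
          exact (hvpos j0 hj0T).ne' (hvS j0 h)
        -- apply induction hypothesis to S.erase j0
        apply ih (S.erase j0)
        · rw [Finset.card_erase_of_mem hj0S]
          omega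
        · intro ε hε
          obtain ⟨N, hN⟩ := exists_nat_ge (1/ε)
          obtain ⟨k, hkfib, hkN⟩ := hj0inf'.exists_gt N
          have hεk : 1/((k:ℝ)+1) ≤ ε := by
            rw [div_le_iff₀ (by positivity)]
            have h1 : (N:ℝ) ≤ (k:ℝ) := Nat.cast_le.mpr hkN.le
            have h2 : 1/ε ≤ (k:ℝ) + 1 := by linarith
            rw [div_le_iff₀ hε] at h2
            linarith
          refine ⟨y k, hy0 k, ?_, hyw k, lt_of_le_of_lt (hyq k)
            (lt_of_lt_of_le (hxq k) hεk)⟩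
          intro i hi
          rw [Finset.mem_erase] at hi
          push_neg at hi
          by_cases hiS : i ∈ S
          · have hij : i = j0 := by
              by_contra h
              exact (hi h) hiS
            have hjk : j k = j0 := hkfib
            rw [hij, ← hjk]
            exact hyj k
          · exact hyS k i hiS

end Helpers

theorem stmt15 {n : ℕ} (A : Matrix (Fin n) (Fin n) ℝ) (hA : Copositive A)
    (w : Fin n → ℝ) (hw : w ≠ 0) :
    IrreducibleWrtMat A (vecMulVec w w) ↔ ∃ u, IsZeroOf A u ∧ w ⬝ᵥ u ≠ 0 := by
  constructor
  · -- irreducible → exists zero with w ⬝ᵥ u ≠ 0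
    intro hirr
    rw [IrreducibleWrtMat] at hirr
    push_neg at hirr
    have hMsymm : (vecMulVec w w).IsSymm := by
      rw [Matrix.IsSymm]
      ext i j
      simp [vecMulVec_apply, Matrix.transpose_apply, mul_comm]
    have hsub : ∀ γ : ℝ, (A - γ • vecMulVec w w).IsSymm := fun γ => by
      rw [Matrix.IsSymm, Matrix.transpose_sub, Matrix.transpose_smul, hA.1.eq, hMsymm.eq]
    have hviol : ∀ k : ℕ, ∃ x : Fin n → ℝ, (∀ i, 0 ≤ x i) ∧
        x ⬝ᵥ A.mulVec x < (1/((k:ℝ)+1)) * ((w ⬝ᵥ x) * (w ⬝ᵥ x)) := by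
      intro k
      have h := hirr (1/((k:ℝ)+1)) (by positivity)
      rw [Copositive] at h
      push_neg at h
      obtain ⟨x, hx0, hxneg⟩ := h (hsub _)
      refine ⟨x, hx0, ?_⟩
      have hexp : x ⬝ᵥ (A - (1/((k:ℝ)+1)) • vecMulVec w w).mulVec x
          = x ⬝ᵥ A.mulVec x - (1/((k:ℝ)+1)) * ((w ⬝ᵥ x) * (w ⬝ᵥ x)) := by
        rw [sub_mulVec, dotProduct_sub, smul_mulVec, dotProduct_smul, vecMulVec_quad,
          smul_eq_mul]
      rw [hexp] at hxneg
      linarith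
    choose x hx0 hxq using hviol
    have hcne : ∀ k, w ⬝ᵥ x k ≠ 0 := by
      intro k hc
      have h1 := hA.2 (x k) (hx0 k)
      have h2 := hxq k
      rw [hc] at h2
      simp at h2
      linarith
    -- pigeonhole on the sign of w ⬝ᵥ x k
    have hsplit : ({k : ℕ | 0 < w ⬝ᵥ x k} ∪ {k : ℕ | w ⬝ᵥ x k < 0}).Infinite := by
      have : ({k : ℕ | 0 < w ⬝ᵥ x k} ∪ {k : ℕ | w ⬝ᵥ x k < 0}) = Set.univ := by
        apply Set.eq_univ_of_forall
        intro k
        rcases lt_or_gt_of_ne (hcne k) with h | h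
        · exact Or.inr h
        · exact Or.inl h
      rw [this]
      exact Set.infinite_univ
    have hsigma : ∃ σ : ℝ, σ * σ = 1 ∧ ({k : ℕ | 0 < σ * (w ⬝ᵥ x k)}).Infinite := by
      rcases Set.infinite_union.mp hsplit with h | h
      · exact ⟨1, by norm_num, by
          apply Set.Infinite.mono _ h
          intro k hk
          simpa using hk⟩
      · exact ⟨-1, by norm_num, by
          apply Set.Infinite.mono _ h
          intro k hk
          simp only [Set.mem_setOf_eq] at hk ⊢
          linarith⟩
    obtain ⟨σ, hσ1, hI⟩ := hsigma
    have hkey := key A hA (σ • w) n Finset.univ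
      (by simp)
      (by
        intro ε hε
        obtain ⟨N, hN⟩ := exists_nat_ge (1/ε)
        obtain ⟨k, hkI, hkN⟩ := hI.exists_gt N
        have hc : 0 < σ * (w ⬝ᵥ x k) := hkI
        have hεk : 1/((k:ℝ)+1) ≤ ε := by
          rw [div_le_iff₀ (by positivity)]
          have h1 : (N:ℝ) ≤ (k:ℝ) := Nat.cast_le.mpr hkN.le
          have h2 : 1/ε ≤ (k:ℝ) + 1 := by linarith
          rw [div_le_iff₀ hε] at h2
          linarith
        set c := w ⬝ᵥ x k with hcdef
        refine ⟨(σ * c)⁻¹ • x k, ?_, ?_, ?_, ?_⟩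
        · intro i
          have := hx0 k i
          have h3 : 0 ≤ (σ * c)⁻¹ := by positivity
          simp only [Pi.smul_apply, smul_eq_mul]
          positivity
        · intro i hi
          exact absurd (Finset.mem_univ i) hi
        · rw [smul_dotProduct, dotProduct_smul]
          simp only [smul_eq_mul]
          have : σ * ((σ * c)⁻¹ * c) = (σ * c) * (σ * c)⁻¹ := by ring
          rw [this, mul_inv_cancel₀ hc.ne']
        · have hq := hxq k
          have hinv2 : 0 < (σ * c)⁻¹ * (σ * c)⁻¹ := by positivity
          have hexp : ((σ * c)⁻¹ • x k) ⬝ᵥ A.mulVec ((σ * c)⁻¹ • x k)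
              = (σ * c)⁻¹ * (σ * c)⁻¹ * (x k ⬝ᵥ A.mulVec (x k)) := by
            rw [smul_dotProduct, mulVec_smul, dotProduct_smul]
            simp only [smul_eq_mul]
            ring
          rw [hexp]
          have hcc : (σ * c)⁻¹ * (σ * c)⁻¹ * ((1/((k:ℝ)+1)) * (c * c)) = 1/((k:ℝ)+1) := by
            have hcc2 : c * c = (σ * c) * (σ * c) := by nlinarith [hσ1]
            calc (σ * c)⁻¹ * (σ * c)⁻¹ * ((1/((k:ℝ)+1)) * (c * c))
                = (1/((k:ℝ)+1)) * (((σ * c) * (σ * c)⁻¹) * ((σ * c) * (σ * c)⁻¹)) := by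
                  rw [hcc2]; ring
              _ = 1/((k:ℝ)+1) := by rw [mul_inv_cancel₀ hc.ne']; ring
          calc (σ * c)⁻¹ * (σ * c)⁻¹ * (x k ⬝ᵥ A.mulVec (x k))
              < (σ * c)⁻¹ * (σ * c)⁻¹ * ((1/((k:ℝ)+1)) * (c * c)) :=
                mul_lt_mul_of_pos_left hq hinv2
            _ = 1/((k:ℝ)+1) := hcc
            _ ≤ ε := hεk)
    obtain ⟨z, hz0, hzw, hzq⟩ := hkey
    have hwz : σ * (w ⬝ᵥ z) = 1 := by
      rw [smul_dotProduct] at hzw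
      simpa using hzw
    refine ⟨z, ⟨?_, hz0, hzq⟩, ?_⟩
    · intro hz
      rw [hz] at hwz
      simp at hwz
    · intro h
      rw [h] at hwz
      simp at hwz
  · -- zero with w ⬝ᵥ u ≠ 0 → irreducible
    rintro ⟨u, ⟨hune, hu0, huq⟩, hwu⟩ ⟨γ, hγ, hcop⟩
    have h := hcop.2 u hu0
    have hexp : u ⬝ᵥ (A - γ • vecMulVec w w).mulVec u
        = u ⬝ᵥ A.mulVec u - γ * ((w ⬝ᵥ u) * (w ⬝ᵥ u)) := by
      rw [sub_mulVec, dotProduct_sub, smul_mulVec, dotProduct_smul, vecMulVec_quad,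
        smul_eq_mul]
    rw [hexp, huq] at h
    have hp := mul_self_pos.mpr hwu
    nlinarith
end

section
/- Let A be an n×n copositive matrix and let w ∈ ℝ^n be a nonzero vector. Then A is irreducible with respect to the rank-one matrix w w^T if and only if there exists a minimal zero u of A with w^T u ≠ 0. -/
open Matrix

/-!
A zero `u` with `w ⬝ᵥ u ≠ 0` obstructs every `A - γ • wwᵀ` with `γ > 0`, since
`uᵀ (A - γ • wwᵀ) u = -γ (w ⬝ᵥ u)² < 0`.

Conversely, suppose `w` is orthogonal to every minimal zero. By induction over the faces of the
standard simplex, every small enough `γ > 0` satisfies `γ (w ⬝ᵥ x)² ≤ xᵀ A x` on the face. On a face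
carrying no zero of `A`, the form `xᵀ A x` is bounded below there by a positive constant. Otherwise
the face carries a minimal zero `u`, and `γ` is already small enough for all proper subfaces, so a
negative minimum of `xᵀ (A - γ • wwᵀ) x` over the face is attained at a point `y` of its relative
interior. Optimality in the direction `u - (∑ uᵢ) y` gives `uᵀ (A - γ • wwᵀ) y = (∑ uᵢ) · min < 0`,
whereas `uᵀ (A - γ • wwᵀ) y = yᵀ A u ≥ 0` because `A u ≥ 0` and `w ⬝ᵥ u = 0`.
-/

open Filter Topology

lemma Matrix.IsSymm.sub_smul_vecMulVec {ι : Type*} {A : Matrix ι ι ℝ} (hA : A.IsSymm) (γ : ℝ)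
    (w : ι → ℝ) :
    (A - γ • vecMulVec w w).IsSymm := by
  refine hA.sub (IsSymm.smul ?_ γ)
  ext i j
  simp [vecMulVec_apply, mul_comm]

section Quadratic

variable {ι : Type*} [Fintype ι]

lemma Matrix.IsSymm.dotProduct_mulVec_comm {A : Matrix ι ι ℝ} (hA : A.IsSymm) (u v : ι → ℝ) :
    u ⬝ᵥ A *ᵥ v = v ⬝ᵥ A *ᵥ u := by
  rw [dotProduct_mulVec, ← mulVec_transpose, hA, dotProduct_comm]

lemma Matrix.IsSymm.quad_add_smul {A : Matrix ι ι ℝ} (hA : A.IsSymm) (u v : ι → ℝ) (t : ℝ) :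
    (u + t • v) ⬝ᵥ A *ᵥ (u + t • v)
      = u ⬝ᵥ A *ᵥ u + t * (2 * (v ⬝ᵥ A *ᵥ u)) + t ^ 2 * (v ⬝ᵥ A *ᵥ v) := by
  simp only [mulVec_add, mulVec_smul, dotProduct_add, add_dotProduct, smul_dotProduct,
    dotProduct_smul, smul_eq_mul, hA.dotProduct_mulVec_comm u v]
  ring

lemma quad_vecMulVec_self (w x : ι → ℝ) : x ⬝ᵥ vecMulVec w w *ᵥ x = (w ⬝ᵥ x) ^ 2 := by
  rw [vecMulVec_mulVec, op_smul_eq_smul, dotProduct_smul, smul_eq_mul, dotProduct_comm, sq]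

lemma quad_sub_smul_vecMulVec (A : Matrix ι ι ℝ) (γ : ℝ) (w x : ι → ℝ) :
    x ⬝ᵥ (A - γ • vecMulVec w w) *ᵥ x = x ⬝ᵥ A *ᵥ x - γ * (w ⬝ᵥ x) ^ 2 := by
  rw [sub_mulVec, dotProduct_sub, smul_mulVec, dotProduct_smul, smul_eq_mul,
    quad_vecMulVec_self]

lemma continuous_quad (A : Matrix ι ι ℝ) : Continuous fun x : ι → ℝ => x ⬝ᵥ A *ᵥ x :=
  continuous_id.dotProduct (continuous_const.matrix_mulVec continuous_id)

end Quadratic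

lemma nonneg_of_eventually_nhdsGT {a b : ℝ}
    (h : ∀ᶠ t in 𝓝[>] (0 : ℝ), 0 ≤ t * a + t ^ 2 * b) : 0 ≤ a := by
  have hlim : Tendsto (fun t => a + t * b) (𝓝[>] 0) (𝓝 a) :=
    (Continuous.tendsto' (by fun_prop) 0 a (by simp)).mono_left nhdsWithin_le_nhds
  refine ge_of_tendsto hlim ((h.and self_mem_nhdsWithin).mono fun t ⟨ht, htpos⟩ => ?_)
  have htpos : (0 : ℝ) < t := htpos
  nlinarith

lemma eq_zero_of_eventually_nhds {a b : ℝ}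
    (h : ∀ᶠ t in 𝓝 (0 : ℝ), 0 ≤ t * a + t ^ 2 * b) : a = 0 := by
  have hneg : Tendsto (fun t : ℝ => -t) (𝓝[>] 0) (𝓝 0) :=
    (continuous_neg.tendsto' 0 0 neg_zero).mono_left nhdsWithin_le_nhds
  have h₁ := nonneg_of_eventually_nhdsGT (h.filter_mono nhdsWithin_le_nhds)
  have h₂ : 0 ≤ -a := nonneg_of_eventually_nhdsGT (b := b) <|
    (hneg.eventually h).mono fun t ht => by linarith
  linarith

section Zeros

variable {n : ℕ} {A : Matrix (Fin n) (Fin n) ℝ}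

lemma Copositive.mulVec_nonneg_of_isZeroOf (hA : Copositive A) {u : Fin n → ℝ}
    (hu : IsZeroOf A u) (i : Fin n) : 0 ≤ (A *ᵥ u) i := by
  have hquad : ∀ t : ℝ, 0 < t →
      0 ≤ t * (2 * (A *ᵥ u) i) + t ^ 2 * (Pi.single i 1 ⬝ᵥ A *ᵥ Pi.single i 1) := by
    intro t ht
    have hnonneg : 0 ≤ u + t • (Pi.single i 1 : Fin n → ℝ) :=
      add_nonneg hu.2.1 (smul_nonneg ht.le (Pi.single_nonneg.2 zero_le_one))
    simpa [hA.1.quad_add_smul, hu.2.2, single_dotProduct] using hA.2 _ hnonneg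
  have := nonneg_of_eventually_nhdsGT (eventually_nhdsWithin_of_forall hquad)
  linarith

lemma exists_isMinimalZeroOf_supp_subset {v : Fin n → ℝ} (hv : IsZeroOf A v) :
    ∃ u, IsMinimalZeroOf A u ∧ Supp u ⊆ Supp v := by
  obtain ⟨_, ⟨u, hu, rfl, huv⟩, hmin⟩ := wellFounded_lt.has_min
    {T : Set (Fin n) | ∃ u, IsZeroOf A u ∧ Supp u = T ∧ T ⊆ Supp v} ⟨_, v, hv, rfl, subset_rfl⟩
  exact ⟨u, ⟨hu, fun ⟨u', hu', hlt⟩ => hmin _ ⟨u', hu', rfl, hlt.1.trans huv⟩ hlt⟩, huv⟩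

end Zeros

section Simplex

variable {ι : Type*} [Fintype ι]

def simplexFace (S : Set ι) : Set (ι → ℝ) := {x | x ∈ stdSimplex ℝ ι ∧ Supp x ⊆ S}

lemma isCompact_simplexFace (S : Set ι) : IsCompact (simplexFace S) := by
  have hclosed : IsClosed {x : ι → ℝ | Supp x ⊆ S} := by
    have : {x : ι → ℝ | Supp x ⊆ S} = ⋂ i ∈ Sᶜ, {x | x i = 0} := by
      ext x
      simp [Supp, Set.subset_def, not_imp_comm]
    rw [this]
    exact isClosed_biInter fun i _ => isClosed_eq (continuous_apply i) continuous_const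
  exact (isCompact_stdSimplex ℝ ι).inter_right hclosed

lemma ne_zero_of_mem_stdSimplex {x : ι → ℝ} (hx : x ∈ stdSimplex ℝ ι) : x ≠ 0 := by
  rintro rfl
  simpa using hx.2

lemma nonneg_quad_of_nonneg_on_stdSimplex {B : Matrix ι ι ℝ}
    (hB : ∀ x ∈ stdSimplex ℝ ι, 0 ≤ x ⬝ᵥ B *ᵥ x) (x : ι → ℝ) (hx : ∀ i, 0 ≤ x i) :
    0 ≤ x ⬝ᵥ B *ᵥ x := by
  obtain hs | hs := (Finset.sum_nonneg fun i _ => hx i : 0 ≤ ∑ i, x i).eq_or_lt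
  · obtain rfl : x = 0 := funext fun i =>
      (Finset.sum_eq_zero_iff_of_nonneg fun i _ => hx i).1 hs.symm i (Finset.mem_univ i)
    simp
  · have hmem : (∑ i, x i)⁻¹ • x ∈ stdSimplex ℝ ι :=
      ⟨fun i => mul_nonneg (inv_nonneg.2 hs.le) (hx i), by
        simp [← Finset.mul_sum, inv_mul_cancel₀ hs.ne']⟩
    have hc : 0 < (∑ i, x i)⁻¹ := inv_pos.2 hs
    have := hB _ hmem
    simp only [mulVec_smul, dotProduct_smul, smul_dotProduct, smul_eq_mul] at this
    exact (mul_nonneg_iff_of_pos_left hc).1 ((mul_nonneg_iff_of_pos_left hc).1 this)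

lemma dotProduct_mulVec_eq_zero_of_isMinOn {B : Matrix ι ι ℝ} (hB : B.IsSymm) {x : ι → ℝ}
    (hx : x ∈ simplexFace (Supp x))
    (hmin : IsMinOn (fun y => y ⬝ᵥ B *ᵥ y) (simplexFace (Supp x)) x)
    {d : ι → ℝ} (hd : Supp d ⊆ Supp x) (hsum : ∑ i, d i = 0) : d ⬝ᵥ B *ᵥ x = 0 := by
  have hpath : Tendsto (fun t : ℝ => x + t • d) (𝓝 0) (𝓝 x) :=
    Continuous.tendsto' (by fun_prop) 0 x (by simp)
  have hd' : ∀ i, x i = 0 → d i = 0 := fun i hi => by_contra fun h => hd h hi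
  have hnear : ∀ᶠ t in 𝓝 (0 : ℝ), x + t • d ∈ simplexFace (Supp x) := by
    have hpos : ∀ i ∈ Supp x, ∀ᶠ y in 𝓝 x, 0 < y i := fun i hi =>
      ((continuous_apply i).tendsto x).eventually (lt_mem_nhds ((hx.1.1 i).lt_of_ne' hi))
    refine (hpath.eventually ((eventually_all_finite (Set.toFinite _)).2 hpos)).mono
      fun t ht => ⟨⟨fun i => ?_, ?_⟩, fun i hi => ?_⟩
    · by_cases hi : x i = 0
      · simp [hi, hd' i hi]
      · exact (ht i hi).le
    · simp [Finset.sum_add_distrib, ← Finset.mul_sum, hsum, hx.1.2]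
    · by_contra hxi
      exact hi (by simp [of_not_not hxi, hd' i (of_not_not hxi)])
  have := eq_zero_of_eventually_nhds (a := 2 * (d ⬝ᵥ B *ᵥ x)) (b := d ⬝ᵥ B *ᵥ d) <|
    hnear.mono fun t ht => by
      have : x ⬝ᵥ B *ᵥ x ≤ (x + t • d) ⬝ᵥ B *ᵥ (x + t • d) := hmin ht
      linarith [hB.quad_add_smul x d t]
  simpa using this

end Simplex

section Reduction

variable {n : ℕ} {A : Matrix (Fin n) (Fin n) ℝ} {w : Fin n → ℝ}

lemma mul_sq_dotProduct_le_of_boundary (hA : Copositive A) {u : Fin n → ℝ} (hu : IsZeroOf A u)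
    (hwu : w ⬝ᵥ u = 0) {S : Set (Fin n)} (huS : Supp u ⊆ S) {γ : ℝ}
    (hbd : ∀ x ∈ simplexFace S, Supp x ⊂ S → γ * (w ⬝ᵥ x) ^ 2 ≤ x ⬝ᵥ A *ᵥ x) :
    ∀ x ∈ simplexFace S, γ * (w ⬝ᵥ x) ^ 2 ≤ x ⬝ᵥ A *ᵥ x := by
  set B := A - γ • vecMulVec w w
  by_contra! ⟨x, hx, hxneg⟩
  obtain ⟨y, hy, hymin⟩ := (isCompact_simplexFace S).exists_isMinOn ⟨x, hx⟩
    (continuous_quad B).continuousOn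
  have hyneg : y ⬝ᵥ B *ᵥ y < 0 :=
    (hymin hx).trans_lt (show x ⬝ᵥ B *ᵥ x < 0 by rw [quad_sub_smul_vecMulVec]; linarith)
  have hSy : Supp y = S := by
    refine hy.2.antisymm (by_contra fun h => ?_)
    have := hbd y hy ⟨hy.2, h⟩
    rw [quad_sub_smul_vecMulVec] at hyneg
    linarith
  rw [← hSy] at hy hymin huS
  have hfo := dotProduct_mulVec_eq_zero_of_isMinOn (hA.1.sub_smul_vecMulVec γ w) hy hymin
    (d := u - (∑ i, u i) • y) (fun i hi => by_contra fun hyi => hi (by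
      simp [of_not_not hyi, of_not_not fun h => hyi (huS h)]))
    (by simp [Finset.sum_sub_distrib, ← Finset.mul_sum, hy.1.2])
  have hsum : 0 < ∑ i, u i := by
    obtain ⟨i, hi⟩ := Function.ne_iff.1 hu.1
    exact Finset.sum_pos' (fun i _ => hu.2.1 i) ⟨i, Finset.mem_univ i, (hu.2.1 i).lt_of_ne' hi⟩
  have hcross : u ⬝ᵥ B *ᵥ y = y ⬝ᵥ A *ᵥ u := by
    rw [sub_mulVec, dotProduct_sub, smul_mulVec, vecMulVec_mulVec, op_smul_eq_smul,
      dotProduct_smul, dotProduct_smul, dotProduct_comm u w, hwu, smul_zero, smul_zero, sub_zero,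
      hA.1.dotProduct_mulVec_comm]
  have hAu : 0 ≤ y ⬝ᵥ A *ᵥ u :=
    Finset.sum_nonneg fun i _ => mul_nonneg (hy.1.1 i) (hA.mulVec_nonneg_of_isZeroOf hu i)
  rw [sub_dotProduct, smul_dotProduct, smul_eq_mul, sub_eq_zero] at hfo
  nlinarith

lemma eventually_mul_sq_dotProduct_le_of_not_exists_isZeroOf (hA : Copositive A)
    (w : Fin n → ℝ) {S : Set (Fin n)} (hS : ¬ ∃ u, IsZeroOf A u ∧ Supp u ⊆ S) :
    ∀ᶠ γ in 𝓝[>] 0, ∀ x ∈ simplexFace S, γ * (w ⬝ᵥ x) ^ 2 ≤ x ⬝ᵥ A *ᵥ x := by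
  obtain ⟨m, hm, hmle⟩ := (isCompact_simplexFace S).exists_forall_le'
    (continuous_quad A).continuousOn fun x hx => (hA.2 x hx.1.1).lt_of_ne fun h =>
      hS ⟨x, ⟨ne_zero_of_mem_stdSimplex hx.1, hx.1.1, h.symm⟩, hx.2⟩
  obtain ⟨C, hC⟩ := (isCompact_simplexFace S).exists_bound_of_continuousOn
    (f := fun x => (w ⬝ᵥ x) ^ 2) (by fun_prop)
  have hlim : Tendsto (fun γ => γ * C) (𝓝[>] 0) (𝓝 0) :=
    (Continuous.tendsto' (by fun_prop) 0 0 (zero_mul C)).mono_left nhdsWithin_le_nhds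
  filter_upwards [hlim.eventually (gt_mem_nhds hm), self_mem_nhdsWithin] with γ hγC hγ x hx
  calc γ * (w ⬝ᵥ x) ^ 2 ≤ γ * C :=
        mul_le_mul_of_nonneg_left ((le_abs_self _).trans (hC x hx)) hγ.out.le
    _ ≤ m := hγC.le
    _ ≤ x ⬝ᵥ A *ᵥ x := hmle x hx

lemma eventually_mul_sq_dotProduct_le (hA : Copositive A)
    (hw : ∀ u, IsMinimalZeroOf A u → w ⬝ᵥ u = 0) (S : Set (Fin n)) :
    ∀ᶠ γ in 𝓝[>] 0, ∀ x ∈ simplexFace S, γ * (w ⬝ᵥ x) ^ 2 ≤ x ⬝ᵥ A *ᵥ x := by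
  induction S using WellFoundedLT.induction with
  | _ S ih =>
  by_cases hS : ∃ v, IsZeroOf A v ∧ Supp v ⊆ S
  · obtain ⟨v, hv, hvS⟩ := hS
    obtain ⟨u, hu, huv⟩ := exists_isMinimalZeroOf_supp_subset hv
    filter_upwards [(eventually_all_finite (Set.toFinite {T | T < S})).2 ih] with γ hγ
    exact mul_sq_dotProduct_le_of_boundary hA hu.1 (hw u hu) (huv.trans hvS)
      fun x hx hxS => hγ _ hxS x ⟨hx.1, subset_rfl⟩
  · exact eventually_mul_sq_dotProduct_le_of_not_exists_isZeroOf hA w hS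

end Reduction

section Irreducibility

variable {n : ℕ} {A : Matrix (Fin n) (Fin n) ℝ} {w : Fin n → ℝ}

lemma exists_copositive_sub_smul_vecMulVec (hA : Copositive A)
    (hw : ∀ u, IsMinimalZeroOf A u → w ⬝ᵥ u = 0) :
    ∃ γ : ℝ, 0 < γ ∧ Copositive (A - γ • vecMulVec w w) := by
  obtain ⟨γ, hle, hγ⟩ :=
    ((eventually_mul_sq_dotProduct_le hA hw Set.univ).and self_mem_nhdsWithin).exists
  refine ⟨γ, hγ, hA.1.sub_smul_vecMulVec γ w,
    nonneg_quad_of_nonneg_on_stdSimplex fun x hx => ?_⟩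
  rw [quad_sub_smul_vecMulVec, sub_nonneg]
  exact hle x ⟨hx, Set.subset_univ _⟩

lemma not_copositive_sub_smul_vecMulVec {u : Fin n → ℝ} (hu : IsZeroOf A u) (hwu : w ⬝ᵥ u ≠ 0)
    {γ : ℝ} (hγ : 0 < γ) : ¬ Copositive (A - γ • vecMulVec w w) := fun hcop => by
  have := hcop.2 u hu.2.1
  rw [quad_sub_smul_vecMulVec, hu.2.2] at this
  have : 0 < γ * (w ⬝ᵥ u) ^ 2 := by positivity
  linarith

end Irreducibility

theorem stmt16_general {n : ℕ} (A : Matrix (Fin n) (Fin n) ℝ) (hA : Copositive A)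
    (w : Fin n → ℝ) :
    IrreducibleWrtMat A (vecMulVec w w) ↔ ∃ u, IsMinimalZeroOf A u ∧ w ⬝ᵥ u ≠ 0 := by
  refine ⟨fun hirr => ?_, fun ⟨u, hu, hwu⟩ ⟨γ, hγ, hcop⟩ =>
    not_copositive_sub_smul_vecMulVec hu.1 hwu hγ hcop⟩
  by_contra! hw
  exact hirr (exists_copositive_sub_smul_vecMulVec hA hw)

theorem stmt16 {n : ℕ} (A : Matrix (Fin n) (Fin n) ℝ) (hA : Copositive A)
    (w : Fin n → ℝ) (hw : w ≠ 0) :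
    IrreducibleWrtMat A (vecMulVec w w) ↔ ∃ u, IsMinimalZeroOf A u ∧ w ⬝ᵥ u ≠ 0 :=
  stmt16_general A hA w
end
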